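/- Assume H is symmetric, i.e. h ∈ H if and only if 1 − h ∈ H. Then for every integer r with 1 ≤ r ≤ T/2, ‖𝔔_T^r − 𝔔_T^{2r}‖_F = 1/2 − (1/2)·inf_{h ∈ H} [ (1/r)·Σ_{t=T−r+1}^T L_h(X_t, 1−Y_t) + (1/r)·Σ_{t=T−2r+1}^{T−r} L_h(X_t, Y_t) ]. -/
import Mathlib


open MeasureTheory

/-- The zero-one loss of a binary hypothesis `h` on a labeled point `z = (x, y)`:
`L_h(x, y) = 1` if `y ≠ h(x)` and `0` otherwise. -/
noncomputable def lossB {X : Type*} (h : X → Bool) (z : X × Bool) : ℝ :=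
  if z.2 = h z.1 then 0 else 1

lemma lossB_nonneg {X : Type*} (h : X → Bool) (z : X × Bool) : 0 ≤ lossB h z := by
  unfold lossB; split <;> norm_num

lemma lossB_le_one {X : Type*} (h : X → Bool) (z : X × Bool) : lossB h z ≤ 1 := by
  unfold lossB; split <;> norm_num

lemma lossB_flip {X : Type*} (h : X → Bool) (z : X × Bool) :
    lossB h (z.1, !z.2) = 1 - lossB h z := by
  unfold lossB; cases hz : z.2 <;> cases hx : h z.1 <;> simp [hz, hx]

lemma lossB_neg {X : Type*} (h h' : X → Bool) (hh : ∀ x, h' x = !(h x)) (z : X × Bool) :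
    lossB h' z = 1 - lossB h z := by
  unfold lossB; rw [hh]; cases hz : z.2 <;> cases hx : h z.1 <;> simp [hz, hx]

/-- for a symmetric hypothesis class `H`, the empirical discrepancy
`‖𝔔_T^r − 𝔔_T^{2r}‖_F` equals `1/2 − (1/2)·inf_{h ∈ H}` of the mixed empirical risk
where the labels of the most recent `r` points are flipped. -/
theorem stmt8 {X : Type*} [MeasurableSpace X]
    (H : ℕ → X → Bool) (hHmeas : ∀ n, Measurable (H n))
    (hsym : ∀ n, ∃ m, ∀ x, H m x = !(H n x))
    (T : ℕ) (XY : ℕ → X × Bool)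
    (r : ℕ) (hr1 : 1 ≤ r) (hrT : 2 * r ≤ T) :
    (⨆ n, |(r : ℝ)⁻¹ * ∑ t ∈ Finset.Icc (T - r + 1) T, lossB (H n) (XY t)
        - ((2 * r : ℕ) : ℝ)⁻¹ * ∑ t ∈ Finset.Icc (T - 2 * r + 1) T, lossB (H n) (XY t)|)
      = 1 / 2 - (1 / 2) *
        ⨅ n, ((r : ℝ)⁻¹ * ∑ t ∈ Finset.Icc (T - r + 1) T,
            lossB (H n) ((XY t).1, !(XY t).2)
          + (r : ℝ)⁻¹ * ∑ t ∈ Finset.Icc (T - 2 * r + 1) (T - r),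
            lossB (H n) (XY t)) := by
  have hrpos : (0:ℝ) < r := by exact_mod_cast hr1
  have hrT' : r ≤ T := by omega
  set a : ℕ → ℝ := fun n => ∑ t ∈ Finset.Ioc (T - r) T, lossB (H n) (XY t) with ha
  set b : ℕ → ℝ := fun n => ∑ t ∈ Finset.Ioc (T - 2*r) (T - r), lossB (H n) (XY t) with hb
  set g : ℕ → ℝ := fun n => (a n - b n) / (2 * r) with hg
  have hcard1 : (Finset.Ioc (T - r) T).card = r := by rw [Nat.card_Ioc]; omega
  have hcard2 : (Finset.Ioc (T - 2*r) (T - r)).card = r := by rw [Nat.card_Ioc]; omega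
  have ha0 : ∀ n, 0 ≤ a n := fun n => Finset.sum_nonneg fun t _ => lossB_nonneg _ _
  have hb0 : ∀ n, 0 ≤ b n := fun n => Finset.sum_nonneg fun t _ => lossB_nonneg _ _
  have har : ∀ n, a n ≤ r := by
    intro n
    calc a n ≤ ∑ t ∈ Finset.Ioc (T - r) T, (1:ℝ) :=
          Finset.sum_le_sum fun t _ => lossB_le_one _ _
      _ = r := by rw [Finset.sum_const, hcard1]; simp
  have hbr : ∀ n, b n ≤ r := by
    intro n
    calc b n ≤ ∑ t ∈ Finset.Ioc (T - 2*r) (T - r), (1:ℝ) :=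
          Finset.sum_le_sum fun t _ => lossB_le_one _ _
      _ = r := by rw [Finset.sum_const, hcard2]; simp
  have hgbd : ∀ n, |g n| ≤ 1/2 := by
    intro n
    rw [hg, abs_div, abs_of_pos (by positivity : (0:ℝ) < 2 * r),
      div_le_iff₀ (by positivity)]
    have := har n; have := hbr n; have := ha0 n; have := hb0 n
    rw [abs_le]; constructor <;> nlinarith
  -- simplify the LHS summand
  have hsplit : ∀ n, ∑ t ∈ Finset.Ioc (T - 2*r) T, lossB (H n) (XY t) = b n + a n := by
    intro n
    rw [hb, ha]
    exact (Finset.sum_Ioc_consecutive _ (by omega : T - 2*r ≤ T - r)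
      (by omega : T - r ≤ T)).symm
  have key1 : ∀ n, (r : ℝ)⁻¹ * ∑ t ∈ Finset.Icc (T - r + 1) T, lossB (H n) (XY t)
        - ((2 * r : ℕ) : ℝ)⁻¹ * ∑ t ∈ Finset.Icc (T - 2 * r + 1) T, lossB (H n) (XY t)
      = g n := by
    intro n
    rw [Finset.Icc_add_one_left_eq_Ioc, Finset.Icc_add_one_left_eq_Ioc, hsplit n]
    show (r : ℝ)⁻¹ * a n - ((2 * r : ℕ) : ℝ)⁻¹ * (b n + a n) = (a n - b n) / (2 * r)
    push_cast
    field_simp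
    ring
  -- simplify the RHS summand
  have hflip : ∀ n, ∑ t ∈ Finset.Ioc (T - r) T, lossB (H n) ((XY t).1, !(XY t).2)
      = r - a n := by
    intro n
    have : ∀ t ∈ Finset.Ioc (T - r) T,
        lossB (H n) ((XY t).1, !(XY t).2) = 1 - lossB (H n) (XY t) :=
      fun t _ => lossB_flip _ _
    rw [Finset.sum_congr rfl this, Finset.sum_sub_distrib, Finset.sum_const, hcard1]
    simp [ha]
  have key2 : ∀ n, ((r : ℝ)⁻¹ * ∑ t ∈ Finset.Icc (T - r + 1) T,
            lossB (H n) ((XY t).1, !(XY t).2)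
          + (r : ℝ)⁻¹ * ∑ t ∈ Finset.Icc (T - 2 * r + 1) (T - r),
            lossB (H n) (XY t)) = 1 - 2 * g n := by
    intro n
    rw [Finset.Icc_add_one_left_eq_Ioc, Finset.Icc_add_one_left_eq_Ioc, hflip n]
    show (r : ℝ)⁻¹ * ((r:ℝ) - a n) + (r : ℝ)⁻¹ * b n = 1 - 2 * ((a n - b n) / (2 * r))
    field_simp
    ring
  rw [iSup_congr fun n => congrArg abs (key1 n), iInf_congr key2]
  -- symmetry: values of g come in ± pairs
  have hneg : ∀ n, ∃ m, g m = -g n := by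
    intro n
    obtain ⟨m, hm⟩ := hsym n
    refine ⟨m, ?_⟩
    have haa : a m = r - a n := by
      show (∑ t ∈ Finset.Ioc (T - r) T, lossB (H m) (XY t))
          = (r:ℝ) - ∑ t ∈ Finset.Ioc (T - r) T, lossB (H n) (XY t)
      have : ∀ t ∈ Finset.Ioc (T - r) T,
          lossB (H m) (XY t) = 1 - lossB (H n) (XY t) := fun t _ => lossB_neg _ _ hm _
      rw [Finset.sum_congr rfl this, Finset.sum_sub_distrib, Finset.sum_const, hcard1]
      simp
    have hbb : b m = r - b n := by
      show (∑ t ∈ Finset.Ioc (T - 2*r) (T - r), lossB (H m) (XY t))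
          = (r:ℝ) - ∑ t ∈ Finset.Ioc (T - 2*r) (T - r), lossB (H n) (XY t)
      have : ∀ t ∈ Finset.Ioc (T - 2*r) (T - r),
          lossB (H m) (XY t) = 1 - lossB (H n) (XY t) := fun t _ => lossB_neg _ _ hm _
      rw [Finset.sum_congr rfl this, Finset.sum_sub_distrib, Finset.sum_const, hcard2]
      simp
    rw [hg]
    simp only [haa, hbb]
    ring
  -- bounded above / below
  have hbddS : BddAbove (Set.range fun n => |g n|) := by
    refine ⟨1/2, ?_⟩; rintro x ⟨n, rfl⟩; exact hgbd n
  have hbddI : BddBelow (Set.range fun n => 1 - 2 * g n) := by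
    refine ⟨0, ?_⟩; rintro x ⟨n, rfl⟩
    have := (abs_le.mp (hgbd n)).2
    show (0:ℝ) ≤ 1 - 2 * g n
    linarith
  set S : ℝ := ⨆ n, |g n| with hS
  set I : ℝ := ⨅ n, (1 - 2 * g n) with hI
  have h1 : S ≤ (1 - I) / 2 := by
    apply ciSup_le
    intro n
    obtain ⟨m, hm⟩ := hneg n
    have i1 : I ≤ 1 - 2 * g n := ciInf_le hbddI n
    have i2 : I ≤ 1 - 2 * g m := ciInf_le hbddI m
    rw [hm] at i2
    rw [abs_le]; constructor <;> linarith
  have h2 : 1 - 2 * S ≤ I := by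
    apply le_ciInf
    intro n
    have : g n ≤ S := le_trans (le_abs_self _) (le_ciSup hbddS n)
    linarith
  linarith
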